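/- arXiv:1104.3181 — 5 statements merged into one kernel-verified Lean document; each statement's English description precedes it below -/
import Mathlib

section
/- Let p > 3 be a prime, let n, k be coprime positive integers with k > n·v_p(n), and let 1 < m < p/2 be an integer. Then the polynomial A(x) = (x^n + 2p^k)((x+2)^n + 2p^k)···((x + 2m−2)^n + 2p^k) + 2p^{mnk} is irreducible over ℚ. -/
open Polynomial

private lemma factor_monic (a b : ℤ) (n : ℕ) (hn : 0 < n) :
    ((X + C a) ^ n + C b).Monic := by
  apply Polynomial.Monic.add_of_left ((monic_X_add_C a).pow n)
  have hdeg : ((X + C a) ^ n).degree = (n : WithBot ℕ) := by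
    rw [degree_pow, degree_X_add_C]
    simp
  rw [hdeg]
  exact lt_of_le_of_lt degree_C_le (by exact_mod_cast Nat.cast_pos.mpr hn)

/-- for a prime `p > 3`, coprime positive integers `n, k` with
`k > n·v_p(n)`, and `1 < m < p/2`, the polynomial
`A(x) = ∏_{j<m} ((x+2j)^n + 2p^k) + 2p^{mnk}` is irreducible over `ℚ`. -/
theorem A_m_irreducible (p n k m : ℕ) (hp : p.Prime) (hp3 : 3 < p)
    (hn : 0 < n) (hk : 0 < k) (hcop : Nat.Coprime n k)
    (hkbig : n * padicValNat p n < k) (hm : 1 < m) (hmp : 2 * m < p) :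
    Irreducible
      ((∏ j ∈ Finset.range m, ((X + C (2 * (j : ℚ))) ^ n + C (2 * (p : ℚ) ^ k))) +
        C (2 * (p : ℚ) ^ (m * n * k))) := by
  -- define the integer polynomial
  set f : ℤ[X] :=
    (∏ j ∈ Finset.range m, ((X + C (2 * (j : ℤ))) ^ n + C (2 * (p : ℤ) ^ k))) +
      C (2 * (p : ℤ) ^ (m * n * k)) with hf
  -- the prod part is monic of degree m*n
  have hfacmonic : ∀ j ∈ Finset.range m,
      ((X + C (2 * (j : ℤ))) ^ n + C (2 * (p : ℤ) ^ k)).Monic :=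
    fun j _ => factor_monic _ _ n hn
  have hprodmonic :
      (∏ j ∈ Finset.range m, ((X + C (2 * (j : ℤ))) ^ n + C (2 * (p : ℤ) ^ k))).Monic :=
    monic_prod_of_monic _ _ hfacmonic
  have hfacdeg : ∀ j : ℕ, ((X + C (2 * (j : ℤ))) ^ n + C (2 * (p : ℤ) ^ k)).natDegree = n := by
    intro j
    rw [natDegree_add_C, natDegree_pow, natDegree_X_add_C, mul_one]
  have hproddeg :
      (∏ j ∈ Finset.range m, ((X + C (2 * (j : ℤ))) ^ n + C (2 * (p : ℤ) ^ k))).natDegree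
        = m * n := by
    rw [natDegree_prod_of_monic _ _ hfacmonic,
      Finset.sum_congr rfl (fun j _ => hfacdeg j), Finset.sum_const, Finset.card_range,
      smul_eq_mul]
  have hmn : 0 < m * n := Nat.mul_pos (by omega) hn
  have hfmonic : f.Monic := by
    rw [hf]
    apply hprodmonic.add_of_left
    rw [degree_eq_natDegree hprodmonic.ne_zero, hproddeg]
    exact lt_of_le_of_lt degree_C_le (by exact_mod_cast Nat.cast_pos.mpr hmn)
  have hfdeg : f.natDegree = m * n := by
    rw [hf, natDegree_add_C, hproddeg]
  -- mod 2, f is X^(m*n)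
  have hp2 : (p : ZMod 2) ≠ 0 := by
    intro h
    have h2 : 2 ∣ p := (ZMod.natCast_eq_zero_iff p 2).mp h
    have := (Nat.prime_dvd_prime_iff_eq Nat.prime_two hp).mp h2
    omega
  have h20 : ((2 : ℤ) : ZMod 2) = 0 := by decide
  have hmod : f.map (Int.castRingHom (ZMod 2)) = X ^ (m * n) := by
    rw [hf, Polynomial.map_add, Polynomial.map_prod, Polynomial.map_C]
    have hfac : ∀ j ∈ Finset.range m,
        Polynomial.map (Int.castRingHom (ZMod 2))
          ((X + C (2 * (j : ℤ))) ^ n + C (2 * (p : ℤ) ^ k)) = X ^ n := by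
      intro j _
      have h2p : (2 : (ZMod 2)[X]) = 0 := by
        rw [← map_ofNat C 2, show (OfNat.ofNat 2 : ZMod 2) = 0 from rfl, map_zero]
      simp [Polynomial.map_add, Polynomial.map_pow, Polynomial.map_C, Int.cast_mul, h20, h2p]
    have hC : (Int.castRingHom (ZMod 2)) (2 * (p:ℤ) ^ (m*n*k)) = 0 := by
      have h2' : (Int.castRingHom (ZMod 2)) (2:ℤ) = 0 := rfl
      rw [map_mul, h2', zero_mul]
    rw [Finset.prod_congr rfl hfac, Finset.prod_const, Finset.card_range, ← pow_mul, hC,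
      map_zero, add_zero, Nat.mul_comm n m]
  -- coefficient conditions
  have hcoeff : ∀ i < f.natDegree, (2 : ℤ) ∣ f.coeff i := by
    intro i hi
    have : (f.coeff i : ZMod 2) = 0 := by
      have := congrArg (fun q => Polynomial.coeff q i) hmod
      simp only [coeff_map, coeff_X_pow] at this
      rw [hfdeg] at hi
      simpa [Nat.ne_of_lt hi] using this
    exact_mod_cast (ZMod.intCast_zmod_eq_zero_iff_dvd _ 2).mp this
  -- constant coefficient is not divisible by 4
  have hc0 : ¬ ((4:ℤ) ∣ f.coeff 0) := by
    have hprod4 : (4:ℤ) ∣ ∏ j ∈ Finset.range m, ((2 * (j:ℤ))^n + 2 * (p:ℤ)^k) := by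
      have h1 : ∀ j ∈ Finset.range m, (2:ℤ) ∣ ((2 * (j:ℤ))^n + 2 * (p:ℤ)^k) := by
        intro j _
        exact dvd_add (dvd_pow (dvd_mul_right 2 _) hn.ne') (dvd_mul_right 2 _)
      have hd := Finset.prod_dvd_prod_of_dvd _ _ h1
      rw [Finset.prod_const, Finset.card_range] at hd
      have h2m : (4:ℤ) ∣ 2 ^ m := by
        have h22 : (2:ℤ)^2 ∣ 2^m := pow_dvd_pow 2 (by omega)
        simpa using h22
      exact h2m.trans hd
    have hc0eq : f.coeff 0 =
        (∏ j ∈ Finset.range m, ((2 * (j:ℤ))^n + 2 * (p:ℤ)^k)) + 2 * (p:ℤ)^(m*n*k) := by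
      rw [hf, coeff_zero_eq_eval_zero]
      simp [eval_prod, zero_pow hn.ne']
    rw [hc0eq]
    intro h
    have h2 : (4:ℤ) ∣ 2 * (p:ℤ)^(m*n*k) := (dvd_add_right hprod4).mp h
    have h3 : (2:ℤ) ∣ (p:ℤ)^(m*n*k) := by
      obtain ⟨c, hc⟩ := h2; exact ⟨c, by linarith⟩
    have h4 : ((2:ℕ):ℤ) ∣ (p:ℤ) := Int.Prime.dvd_pow' Nat.prime_two (by exact_mod_cast h3)
    have : (2:ℕ) ∣ p := by exact_mod_cast h4
    have := (Nat.prime_dvd_prime_iff_eq Nat.prime_two hp).mp this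
    omega
  -- Eisenstein at 2
  have hirr : Irreducible f := by
    apply irreducible_of_eisenstein_criterion (P := Ideal.span {(2:ℤ)})
      (Ideal.span_singleton_prime (by norm_num) |>.mpr Int.prime_two)
    · rw [hfmonic.leadingCoeff, Ideal.mem_span_singleton]
      norm_num
    · intro i hi
      rw [Ideal.mem_span_singleton]
      exact hcoeff i (by
        rwa [degree_eq_natDegree hfmonic.ne_zero, Nat.cast_lt] at hi)
    · rw [degree_eq_natDegree hfmonic.ne_zero, hfdeg]
      exact_mod_cast hmn
    · rw [Ideal.span_singleton_pow, Ideal.mem_span_singleton]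
      norm_num
      exact hc0
    · exact hfmonic.isPrimitive
  -- transfer to ℚ
  have hmap : f.map (Int.castRingHom ℚ) =
      (∏ j ∈ Finset.range m, ((X + C (2 * (j : ℚ))) ^ n + C (2 * (p : ℚ) ^ k))) +
        C (2 * (p : ℚ) ^ (m * n * k)) := by
    rw [hf]
    simp only [Polynomial.map_add, Polynomial.map_prod, Polynomial.map_pow,
      Polynomial.map_C, Polynomial.map_X, Int.coe_castRingHom,
      Int.cast_mul, Int.cast_pow, Int.cast_natCast, Int.cast_ofNat]
  rw [← hmap]
  exact (IsPrimitive.Int.irreducible_iff_irreducible_map_cast hfmonic.isPrimitive).mp hirr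
end

section
/- Let p ≡ 1 (mod 3) be a prime and k a positive integer with 3 ∤ k. Then the discriminant of B(x) = (x² − 2x + 4)³ + p^k equals −2⁶·3⁶·p^{4k}·(p^k + 27). -/
open Polynomial

/-- The discriminant of a monic polynomial `f ∈ ℚ[x]`, computed in `ℂ` via the formula
`disc f = (-1)^(n(n-1)/2) ∏ᵢ f'(rᵢ)`, the product running over the roots `rᵢ` of `f` in `ℂ`. -/
noncomputable def ratDisc (f : Polynomial ℚ) : ℂ :=
  (-1 : ℂ) ^ (f.natDegree * (f.natDegree - 1) / 2) *
    (((f.map (algebraMap ℚ ℂ)).roots).map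
      (fun r => (Polynomial.derivative (f.map (algebraMap ℚ ℂ))).eval r)).prod

/-- `disc((x² - 2x + 4)³ + p^k) = -2⁶ 3⁶ p^{4k} (p^k + 27)`. -/
theorem disc_B_family (p k : ℕ) (hp : p.Prime) (hpmod : p % 3 = 1) (hk : 0 < k)
    (h3k : ¬ (3 ∣ k)) :
    ratDisc ((X ^ 2 - C 2 * X + C 4) ^ 3 + C ((p : ℚ) ^ k)) =
      -(2 : ℂ) ^ 6 * 3 ^ 6 * (p : ℂ) ^ (4 * k) * ((p : ℂ) ^ k + 27) := by
  set c : ℂ := (p : ℂ) ^ k with hc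
  set q : ℂ[X] := X ^ 2 - C 2 * X + C 4 with hq
  set F : ℂ[X] := q ^ 3 + C c with hF
  set f : ℚ[X] := (X ^ 2 - C 2 * X + C 4) ^ 3 + C ((p : ℚ) ^ k) with hf
  have hmap : f.map (algebraMap ℚ ℂ) = F := by
    simp [hf, hF, hq, Polynomial.map_add, Polynomial.map_pow, Polynomial.map_sub,
      Polynomial.map_mul, map_C, map_X, hc, map_pow, map_natCast]
  have hdegq : f.natDegree = 6 := by
    rw [hf]; compute_degree!
  have hFdeg : F.natDegree = 6 := by
    rw [hF, hq]; compute_degree!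
  have hFmonic : F.Monic := by
    rw [hF, hq]; monicity!
  have hcard : F.roots.card = 6 := by
    rw [← hFdeg]
    exact splits_iff_card_roots.mp (IsAlgClosed.splits F)
  have hsplit : (F.roots.map fun a => X - C a).prod = F :=
    prod_multiset_X_sub_C_of_monic_of_roots_card_eq hFmonic (by rw [hcard, hFdeg])
  have hevalp : ∀ a : ℂ, (F.roots.map fun r => a - r).prod = eval a F := by
    intro a
    conv_rhs => rw [← hsplit]
    simp [eval_multiset_prod, Multiset.map_map]
  have hprodsub : ∀ a : ℂ, (F.roots.map fun r => r - a).prod = eval a F := by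
    intro a
    have h1 : (F.roots.map fun r => r - a) = (F.roots.map fun r => (-1) * (a - r)) :=
      Multiset.map_congr rfl (fun r _ => by ring)
    rw [h1, Multiset.prod_map_mul, hevalp]
    simp [hcard]
  -- roots of q
  set s : ℂ := (Real.sqrt 3 : ℝ) * Complex.I with hs
  have hs2 : s ^ 2 = -3 := by
    rw [hs, mul_pow, Complex.I_sq, ← Complex.ofReal_pow, Real.sq_sqrt (by norm_num : (3:ℝ) ≥ 0)]
    norm_num
  have hA : C (1 + s) + C (1 - s) = C (2 : ℂ) := by rw [← C_add]; norm_num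
  have hB : C (1 + s) * C (1 - s) = C (4 : ℂ) := by
    rw [← C_mul]; congr 1; linear_combination -hs2
  have hqf : q = (X - C (1 + s)) * (X - C (1 - s)) := by
    rw [hq]; linear_combination (X : ℂ[X]) * hA - hB
  have hqe1 : eval (1 + s) q = 0 := by rw [hqf]; simp
  have hqe2 : eval (1 - s) q = 0 := by rw [hqf]; simp
  have hFe : ∀ a : ℂ, eval a F = (eval a q) ^ 3 + c := by intro a; simp [hF]
  have hder : derivative F = C 3 * q ^ 2 * (C 2 * X - C 2) := by
    rw [hF, hq]
    simp [derivative_pow]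
  have hterm : ∀ r : ℂ, eval r (derivative F) =
      ((3:ℂ) * ((r - (1 + s)) * (r - (1 - s))) ^ 2) * (2 * (r - 1)) := by
    intro r
    have hq' : eval r q = (r - (1 + s)) * (r - (1 - s)) := by rw [hqf]; simp
    rw [hder]
    simp only [eval_mul, eval_pow, eval_sub, eval_add, eval_C, eval_X, hq']
    ring
  have hmain : (F.roots.map fun r => eval r (derivative F)).prod =
      3 ^ 6 * (c * c) ^ 2 * (2 ^ 6 * (27 + c)) := by
    rw [Multiset.map_congr rfl (fun r _ => hterm r)]
    rw [Multiset.prod_map_mul, Multiset.prod_map_mul, Multiset.prod_map_mul]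
    have hconst3 : (F.roots.map fun _ => (3:ℂ)).prod = 3 ^ 6 := by
      rw [Multiset.map_const', Multiset.prod_replicate, hcard]
    have hconst2 : (F.roots.map fun _ => (2:ℂ)).prod = 2 ^ 6 := by
      rw [Multiset.map_const', Multiset.prod_replicate, hcard]
    have hpow : (F.roots.map fun r => ((r - (1 + s)) * (r - (1 - s))) ^ 2).prod =
        (c * c) ^ 2 := by
      rw [Multiset.prod_map_pow, Multiset.prod_map_mul, hprodsub, hprodsub, hFe, hFe, hqe1, hqe2]
      norm_num
    rw [hconst3, hconst2, hpow, hprodsub, hFe]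
    rw [hq]
    norm_num
  rw [ratDisc, hmap, hdegq, hmain]
  rw [show 4 * k = k * 4 by ring, pow_mul, ← hc]
  norm_num
  ring
end

section
/- Let p ≡ 1 (mod 3) be a prime and k a positive integer with 3 ∤ k. Then over ℚ_p, the polynomial B(x) = (x² − 2x + 4)³ + p^k factors as a product of exactly two monic irreducible polynomials, each of degree 3, each defining a totally ramified extension of ℚ_p of degree 3 with residue degree 1. -/
open Polynomial

/-- `g` defines, via any of its roots, a totally ramified extension of `ℚ_p` of degree `e`
with residue degree 1: the field generated by a root has degree `e` over `ℚ_p` and contains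
an element whose norm has `p`-adic valuation `1`. -/
def DefinesTotallyRamifiedExt (p : ℕ) [Fact p.Prime] (g : Polynomial ℚ_[p]) (e : ℕ) : Prop :=
  ∀ (L : Type) [Field L] [Algebra ℚ_[p] L] (θ : L),
    Polynomial.aeval θ g = 0 →
    Algebra.adjoin ℚ_[p] {θ} = ⊤ →
    Module.finrank ℚ_[p] L = e ∧ ∃ x : L, x ≠ 0 ∧ (Algebra.norm ℚ_[p] x).valuation = 1

/-!
Put `y = x - 1`, so that `B = (y² + 3)³ + p^k`. Since `(y³ + ay² + by + c)(y³ - ay² + by - c)`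
is `(y³ + by)² - (ay² + c)²`, `B` splits into two such cubics as soon as `2b = 9 + a²`,
`b² - 2ac = 27` and `c² = -(27 + p^k)`. Eliminating `b`, this asks for a square root `c` of
`-(27 + p^k)` and then a root `a` of `a⁴ + 18a² - 8ca - 27`. As `p ≡ 1 (mod 3)`, `-3 = t²` is a
square mod `p`; then `c ≡ 3t`, `a ≡ -3t` are simple roots mod `p` (`p ∤ 6`), and Hensel's lemma
lifts them to `ℤ_p`.

A root `θ` of `B` gives `s = θ² - 2θ + 4` with `s³ = -p^k`. In `ℚ_p` this forces `3 ∣ k`, so the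
cubics have no root and are irreducible. In the cubic field `ℚ_p(θ)` it gives `v(N s) = k`,
which is prime to `3 = v(N p)`, so a product of powers of `s` and `p` has norm of valuation `1`.
-/

namespace ZMod

theorem natCast_ne_zero_of_lt {n p : ℕ} (h0 : n ≠ 0) (hn : n < p) : (n : ZMod p) ≠ 0 := by
  rw [Ne, natCast_eq_zero_iff]
  exact fun h => (Nat.le_of_dvd (Nat.pos_of_ne_zero h0) h).not_gt hn

variable {p : ℕ} [Fact p.Prime]

/-- If `ω` is a primitive cube root of unity, then `(2ω + 1)² = -3`. -/
theorem isSquare_neg_three (hp : p % 3 = 1) : IsSquare (-3 : ZMod p) := by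
  have : Fact (Nat.Prime 3) := ⟨Nat.prime_three⟩
  obtain ⟨ω, hω⟩ : ∃ ω : (ZMod p)ˣ, orderOf ω = 3 := by
    apply exists_prime_orderOf_dvd_card'
    rw [Nat.card_eq_fintype_card, card_units]
    omega
  have hω' : IsPrimitiveRoot (ω : ZMod p) 3 :=
    IsPrimitiveRoot.coe_units_iff.mpr (hω ▸ IsPrimitiveRoot.orderOf ω)
  have hsum := hω'.geom_sum_eq_zero (by norm_num)
  simp only [Finset.sum_range_succ, Finset.sum_range_zero] at hsum
  exact ⟨2 * ω + 1, by linear_combination -4 * hsum⟩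

end ZMod

namespace PadicInt

variable {p : ℕ} [Fact p.Prime]

@[simp, norm_cast]
theorem coe_ofNat (n : ℕ) [n.AtLeastTwo] : ((ofNat(n) : ℤ_[p]) : ℚ_[p]) = ofNat(n) :=
  rfl

instance henselianLocalRing : HenselianLocalRing ℤ_[p] where
  is_henselian f hf a₀ h₁ h₂ := HenselianRing.is_henselian f hf a₀ h₁ (h₂.map _)

theorem exists_isRoot_toZMod_eq {f : ℤ_[p][X]} (hf : f.Monic) {t : ZMod p}
    (hroot : f.eval₂ toZMod t = 0) (hsimple : f.derivative.eval₂ toZMod t ≠ 0) :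
    ∃ z : ℤ_[p], f.IsRoot z ∧ toZMod z = t := by
  have key := (HenselianLocalRing.TFAE ℤ_[p]).out 0 2
  exact key.mp henselianLocalRing toZMod (ZMod.ringHom_surjective _) f hf t hroot hsimple

end PadicInt

namespace Padic

variable {p : ℕ} [Fact p.Prime]

theorem valuation_neg (x : ℚ_[p]) : (-x).valuation = x.valuation := by
  rcases eq_or_ne x 0 with rfl | hx
  · simp
  rw [neg_eq_neg_one_mul, valuation_mul (by norm_num) hx,
    show (-1 : ℚ_[p]) = ((-1 : ℤ) : ℚ_[p]) by norm_num, valuation_intCast]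
  simp [padicValInt]

theorem valuation_neg_p_pow (k : ℕ) : (-(p : ℚ_[p]) ^ k).valuation = k := by
  simp [valuation_neg]

variable {L : Type*} [Field L] [Algebra ℚ_[p] L] [FiniteDimensional ℚ_[p] L]

theorem valuation_norm_of_pow_finrank_eq {s : L} {c : ℚ_[p]}
    (h : s ^ Module.finrank ℚ_[p] L = algebraMap ℚ_[p] L c) :
    (Algebra.norm ℚ_[p] s).valuation = c.valuation := by
  have hn : Module.finrank ℚ_[p] L ≠ 0 := Module.finrank_pos.ne'
  have := congrArg valuation (congrArg (Algebra.norm ℚ_[p]) h)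
  rw [map_pow, Algebra.norm_algebraMap, valuation_pow, valuation_pow] at this
  exact Int.eq_of_mul_eq_mul_left (by exact_mod_cast hn) this

/-- Norm valuations of `L/ℚ_p` form a subgroup of `ℤ` containing `[L : ℚ_p] = v(N p)`. -/
theorem exists_valuation_norm_eq_one {s : L} (hs : s ≠ 0)
    (hcop : IsCoprime (Algebra.norm ℚ_[p] s).valuation (Module.finrank ℚ_[p] L)) :
    ∃ x : L, x ≠ 0 ∧ (Algebra.norm ℚ_[p] x).valuation = 1 := by
  obtain ⟨u, v, huv⟩ := hcop
  have hp : (p : L) ≠ 0 := by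
    rw [← map_natCast (algebraMap ℚ_[p] L)]
    exact (_root_.map_ne_zero _).mpr (by exact_mod_cast (Fact.out : p.Prime).ne_zero)
  refine ⟨s ^ u * (p : L) ^ v, mul_ne_zero (zpow_ne_zero _ hs) (zpow_ne_zero _ hp), ?_⟩
  have hNs : Algebra.norm ℚ_[p] s ≠ 0 := Algebra.norm_ne_zero_iff.mpr hs
  have hNp : Algebra.norm ℚ_[p] (p : L) ≠ 0 := Algebra.norm_ne_zero_iff.mpr hp
  rw [map_mul, Algebra.norm_zpow, Algebra.norm_zpow, valuation_mul (zpow_ne_zero _ hNs)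
    (zpow_ne_zero _ hNp), valuation_zpow, valuation_zpow, Algebra.norm_natCast, valuation_pow,
    valuation_p]
  linear_combination huv

end Padic

section CubicFactor

variable {R : Type*} [CommRing R]

noncomputable def cubicFactor (a b c : R) : R[X] :=
  (X - 1) ^ 3 + C a * (X - 1) ^ 2 + C b * (X - 1) + C c

theorem cubicFactor_monic [Nontrivial R] (a b c : R) : (cubicFactor a b c).Monic := by
  unfold cubicFactor; monicity!

theorem natDegree_cubicFactor [Nontrivial R] (a b c : R) :
    (cubicFactor a b c).natDegree = 3 := by
  unfold cubicFactor; compute_degree!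

@[simp]
theorem eval_one_cubicFactor (a b c : R) : (cubicFactor a b c).eval 1 = c := by
  simp [cubicFactor]

theorem cubicFactor_mul_cubicFactor_neg {a b c e : R} (h₁ : 2 * b = 9 + a ^ 2)
    (h₂ : b ^ 2 - 2 * a * c = 27) (h₃ : c ^ 2 = -(27 + e)) :
    cubicFactor a b c * cubicFactor (-a) b (-c) = (X ^ 2 - C 2 * X + C 4) ^ 3 + C e := by
  have hC₁ := congrArg C h₁
  have hC₂ := congrArg C h₂
  have hC₃ := congrArg C h₃
  simp only [map_add, map_sub, map_mul, map_pow, map_neg, map_ofNat] at hC₁ hC₂ hC₃ ⊢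
  unfold cubicFactor
  simp only [map_neg]
  linear_combination (X - 1) ^ 4 * hC₁ + (X - 1) ^ 2 * hC₂ - hC₃

end CubicFactor

variable {p : ℕ} [Fact p.Prime]

open PadicInt in
theorem exists_sq_eq_neg_add_toZMod_eq {t : ZMod p} (ht : t ^ 2 = -3) (h6t : 6 * t ≠ 0)
    {e : ℤ_[p]} (he : toZMod e = 0) :
    ∃ c : ℤ_[p], c ^ 2 = -(27 + e) ∧ toZMod c = 3 * t := by
  have hd : (X ^ 2 + C (27 + e)).derivative.eval₂ toZMod (3 * t) = 6 * t := by
    simp only [derivative_X_pow_succ, derivative_C, derivative_ofNat, eval₂_add, eval₂_mul,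
      eval₂_X_pow, eval₂_one, eval₂_zero, map_add, map_one, map_ofNat, Nat.cast_one]
    ring
  obtain ⟨c, hc, hct⟩ := exists_isRoot_toZMod_eq (by monicity!) (by
      simp only [eval₂_add, eval₂_X_pow, eval₂_C, eval₂_ofNat, map_add, map_ofNat, he]
      linear_combination 9 * ht) (hd ▸ h6t)
  exact ⟨c, by simpa [add_eq_zero_iff_eq_neg] using hc, hct⟩

open PadicInt in
theorem exists_quartic_root_toZMod_eq {t : ZMod p} (ht : t ^ 2 = -3) (h192t : 192 * t ≠ 0)
    {c : ℤ_[p]} (hc : toZMod c = 3 * t) :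
    ∃ a : ℤ_[p], a ^ 4 + 18 * a ^ 2 - 8 * c * a - 27 = 0 := by
  have hd : (X ^ 4 + 18 * X ^ 2 - C (8 * c) * X - 27).derivative.eval₂ toZMod (-3 * t) =
      192 * t := by
    simp only [derivative_sub, derivative_mul, derivative_X_pow_succ, derivative_X, derivative_C,
      derivative_ofNat, eval₂_sub, eval₂_add, eval₂_mul, eval₂_X_pow, eval₂_X, eval₂_C, eval₂_ofNat,
      eval₂_one, eval₂_zero, map_add, map_mul, map_one, map_ofNat, Nat.cast_one, Nat.cast_ofNat, hc]
    linear_combination (-108 * t) * ht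
  obtain ⟨a, ha, -⟩ := exists_isRoot_toZMod_eq (by monicity!) (by
      simp only [eval₂_sub, eval₂_add, eval₂_mul, eval₂_X_pow, eval₂_X, eval₂_C, eval₂_ofNat,
        map_mul, map_ofNat, hc]
      linear_combination (81 * t ^ 2 - 9) * ht) (hd ▸ h192t)
  exact ⟨a, by simpa using ha⟩

theorem exists_cubicFactor_params (hp : p % 3 = 1) {e : ℤ_[p]} (he : PadicInt.toZMod e = 0) :
    ∃ a b c : ℚ_[p], 2 * b = 9 + a ^ 2 ∧ b ^ 2 - 2 * a * c = 27 ∧ c ^ 2 = -(27 + e) ∧ c ≠ 0 := by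
  have h4p : 4 ≤ p := by have := (Fact.out : p.Prime).two_le; omega
  have h2 : (2 : ZMod p) ≠ 0 := by
    exact_mod_cast ZMod.natCast_ne_zero_of_lt two_ne_zero (by omega)
  have h3 : (3 : ZMod p) ≠ 0 := by
    exact_mod_cast ZMod.natCast_ne_zero_of_lt three_ne_zero (by omega)
  obtain ⟨t, ht⟩ := ZMod.isSquare_neg_three hp
  replace ht : t ^ 2 = -3 := by rw [sq, ht]
  have ht0 : t ≠ 0 := by rintro rfl; exact h3 (by linear_combination ht)
  obtain ⟨c, hc, hct⟩ := exists_sq_eq_neg_add_toZMod_eq ht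
    (by rw [show (6 : ZMod p) = 2 * 3 by norm_num]; exact mul_ne_zero (mul_ne_zero h2 h3) ht0) he
  obtain ⟨a, ha⟩ := exists_quartic_root_toZMod_eq ht
    (by rw [show (192 : ZMod p) = 2 ^ 6 * 3 by norm_num]
        exact mul_ne_zero (mul_ne_zero (pow_ne_zero 6 h2) h3) ht0) hct
  have hc0 : c ≠ 0 := by rintro rfl; exact mul_ne_zero h3 ht0 (by rw [← hct, map_zero])
  have hcQ := congrArg ((↑) : ℤ_[p] → ℚ_[p]) hc
  have haQ := congrArg ((↑) : ℤ_[p] → ℚ_[p]) ha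
  push_cast at hcQ haQ
  exact ⟨a, (9 + a ^ 2) / 2, c, by ring, by linear_combination haQ / 4, hcQ,
    PadicInt.coe_ne_zero.mpr hc0⟩

theorem not_isRoot_sextic {k : ℕ} (h3k : ¬ 3 ∣ k) (r : ℚ_[p]) :
    ¬ ((X ^ 2 - C 2 * X + C 4) ^ 3 + C ((p : ℚ_[p]) ^ k)).IsRoot r := by
  intro hr
  have hs : (r ^ 2 - 2 * r + 4) ^ 3 = -(p : ℚ_[p]) ^ k := by
    simp only [IsRoot, eval_add, eval_sub, eval_mul, eval_pow, eval_X, eval_C] at hr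
    linear_combination hr
  have hv := congrArg Padic.valuation hs
  rw [Padic.valuation_pow, Padic.valuation_neg_p_pow] at hv
  exact h3k (Int.natCast_dvd_natCast.mp ⟨_, hv.symm⟩)

theorem irreducible_of_dvd_sextic {k : ℕ} (h3k : ¬ 3 ∣ k) {g : ℚ_[p][X]}
    (hdeg : g.natDegree = 3) (hdvd : g ∣ (X ^ 2 - C 2 * X + C 4) ^ 3 + C ((p : ℚ_[p]) ^ k)) :
    Irreducible g :=
  irreducible_of_degree_le_three_of_not_isRoot (by simp [hdeg])
    fun r hr => not_isRoot_sextic h3k r (hr.dvd hdvd)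

theorem definesTotallyRamifiedExt_of_dvd_sextic {k : ℕ} (h3k : ¬ 3 ∣ k) {g : ℚ_[p][X]}
    (hmon : g.Monic) (hdeg : g.natDegree = 3)
    (hdvd : g ∣ (X ^ 2 - C 2 * X + C 4) ^ 3 + C ((p : ℚ_[p]) ^ k)) :
    DefinesTotallyRamifiedExt p g 3 := by
  intro L _ _ θ hθ htop
  have hint : IsIntegral ℚ_[p] θ := ⟨g, hmon, hθ⟩
  have hmin : minpoly ℚ_[p] θ = g :=
    (minpoly.eq_of_irreducible_of_monic (irreducible_of_dvd_sextic h3k hdeg hdvd) hθ hmon).symm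
  have hadj := IsAdjoinRootMonic.mkOfAdjoinEqTop hint htop
  have : FiniteDimensional ℚ_[p] L := hadj.finite
  have hrank : Module.finrank ℚ_[p] L = 3 := by rw [hadj.finrank, hmin, hdeg]
  refine ⟨hrank, ?_⟩
  set s := θ ^ 2 - 2 * θ + 4
  have hs : s ^ Module.finrank ℚ_[p] L = algebraMap ℚ_[p] L (-(p : ℚ_[p]) ^ k) := by
    have hB := aeval_eq_zero_of_dvd_aeval_eq_zero hdvd hθ
    simp only [map_add, map_sub, map_mul, map_pow, aeval_X, aeval_C, map_ofNat, map_neg] at hB ⊢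
    rw [hrank]
    linear_combination hB
  have hs0 : s ≠ 0 := by
    intro hs0
    rw [hs0, zero_pow Module.finrank_pos.ne', eq_comm, map_eq_zero, neg_eq_zero] at hs
    exact pow_ne_zero k (by exact_mod_cast (Fact.out : p.Prime).ne_zero) hs
  refine Padic.exists_valuation_norm_eq_one hs0 ?_
  rw [Padic.valuation_norm_of_pow_finrank_eq hs, Padic.valuation_neg_p_pow, hrank,
    Nat.isCoprime_iff_coprime]
  exact Nat.coprime_comm.mp ((Nat.Prime.coprime_iff_not_dvd Nat.prime_three).mpr h3k)

/-- for a prime `p ≡ 1 (mod 3)` and `k > 0` with `3 ∤ k`, the polynomial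
`B(x) = (x² - 2x + 4)³ + p^k` is the product of exactly two distinct monic irreducible
cubic polynomials over `ℚ_p`, each defining a totally ramified cubic extension of `ℚ_p`
(with residue degree 1). -/
theorem B_factors_two_ramified_cubics (p k : ℕ) [Fact p.Prime] (hpmod : p % 3 = 1)
    (hk : 0 < k) (h3k : ¬ (3 ∣ k)) :
    ∃ g h : Polynomial ℚ_[p],
      (X ^ 2 - C 2 * X + C 4) ^ 3 + C ((p : ℚ_[p]) ^ k) = g * h ∧
      g ≠ h ∧ g.Monic ∧ h.Monic ∧ Irreducible g ∧ Irreducible h ∧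
      g.natDegree = 3 ∧ h.natDegree = 3 ∧
      DefinesTotallyRamifiedExt p g 3 ∧ DefinesTotallyRamifiedExt p h 3 := by
  obtain ⟨a, b, c, h₁, h₂, h₃, hc⟩ :=
    exists_cubicFactor_params hpmod (e := (p : ℤ_[p]) ^ k) (by simp [hk.ne'])
  push_cast at h₃
  have hfac := (cubicFactor_mul_cubicFactor_neg h₁ h₂ h₃).symm
  have hg : cubicFactor a b c ∣ _ := hfac ▸ dvd_mul_right _ _
  have hh : cubicFactor (-a) b (-c) ∣ _ := hfac ▸ dvd_mul_left _ _
  have hne : cubicFactor a b c ≠ cubicFactor (-a) b (-c) := fun h =>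
    hc (self_eq_neg.mp (by simpa using congrArg (eval 1) h))
  exact ⟨_, _, hfac, hne, cubicFactor_monic _ _ _, cubicFactor_monic _ _ _,
    irreducible_of_dvd_sextic h3k (natDegree_cubicFactor _ _ _) hg,
    irreducible_of_dvd_sextic h3k (natDegree_cubicFactor _ _ _) hh,
    natDegree_cubicFactor _ _ _, natDegree_cubicFactor _ _ _,
    definesTotallyRamifiedExt_of_dvd_sextic h3k (cubicFactor_monic _ _ _)
      (natDegree_cubicFactor _ _ _) hg,
    definesTotallyRamifiedExt_of_dvd_sextic h3k (cubicFactor_monic _ _ _)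
      (natDegree_cubicFactor _ _ _) hh⟩
end

section
/- Let ℓ and p be distinct primes and n, k coprime positive integers. Let Φ_ℓ(x) = 1 + x + ⋯ + x^{ℓ−1} and D(x) = Φ_ℓ(x)^n + p^k. Then v_p(disc(D)) = (ℓ−1)(n·v_p(n) + k(n−1)). -/
/-!
Put `F = Φ_ℓ^n + p^k`, so that `F' = n Φ_ℓ^{n-1} Φ_ℓ'` and, over the roots `r` of `F`,
`disc F = ± n^{deg F} (∏ Φ_ℓ(r))^{n-1} ∏ Φ_ℓ'(r)`. Both products are resultants, hence integers.
The first is `± (p^k)^{ℓ-1}`, because `F ≡ p^k` modulo `Φ_ℓ`. The second is prime to `p`: modulo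
`p` the polynomial `F` becomes `Φ_ℓ^n`, and `Φ_ℓ` is separable modulo `p` since `p ≠ ℓ`.
-/

open Polynomial

namespace Polynomial

theorem Monic.map_resultant_eq_prod_eval {R K : Type*} [CommRing R] [Field K] [IsAlgClosed K]
    (φ : R →+* K) {f : R[X]} (hf : f.Monic) (g : R[X]) :
    φ (resultant f g) = ((f.map φ).roots.map (g.map φ).eval).prod := by
  have h := resultant_eq_prod_eval (f.map φ) (g.map φ) g.natDegree natDegree_map_le
    (IsAlgClosed.splits _)
  rwa [resultant_map_map, (hf.map φ).leadingCoeff, one_pow, one_mul, hf.natDegree_map] at h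

section PowAddC

variable {R : Type*} [CommRing R] {g : R[X]}

theorem Monic.pow_add_C (hg : g.Monic) {n : ℕ} (hn : 0 < n) (hd : 0 < g.natDegree) (c : R) :
    (g ^ n + C c).Monic := by
  nontriviality R
  refine (hg.pow n).add_of_left (degree_C_le.trans_lt ?_)
  rw [degree_eq_natDegree (hg.pow n).ne_zero, hg.natDegree_pow]
  exact_mod_cast Nat.mul_pos hn hd

theorem Monic.resultant_pow_add_C_self (hg : g.Monic) {n : ℕ} (hn : 0 < n) (c : R) :
    resultant (g ^ n + C c) g = (-1) ^ (n * g.natDegree * g.natDegree) * c ^ g.natDegree := by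
  nontriviality R
  obtain ⟨m, rfl⟩ : ∃ m, n = m + 1 := ⟨n - 1, by omega⟩
  have hdeg : (g ^ (m + 1) + C c).natDegree = (m + 1) * g.natDegree := by
    rw [natDegree_add_C, hg.natDegree_pow]
  rw [hdeg, add_comm, pow_succ',
    resultant_add_mul_left (hk := by rw [hg.natDegree_pow, add_one_mul]) (hg := le_rfl),
    resultant_C_left, hg.coeff_natDegree, one_pow, mul_one]

theorem Monic.resultant_pow_add_C_derivative [IsDomain R] (hg : g.Monic) {n : ℕ} (hn : 0 < n)
    (hd : 0 < g.natDegree) (c : R) :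
    resultant (g ^ n + C c) (derivative (g ^ n + C c)) =
      n ^ (n * g.natDegree) * resultant (g ^ n + C c) g ^ (n - 1) *
        resultant (g ^ n + C c) (derivative g) := by
  have hF := hg.pow_add_C hn hd c
  let K := AlgebraicClosure (FractionRing R)
  have hinj : Function.Injective (algebraMap R K) := by
    rw [IsScalarTower.algebraMap_eq R (FractionRing R)]
    exact (algebraMap (FractionRing R) K).injective.comp (IsFractionRing.injective R _)
  have hcard : Multiset.card ((g ^ n + C c).map (algebraMap R K)).roots = n * g.natDegree := by
    rw [← (IsAlgClosed.splits _).natDegree_eq_card_roots, hF.natDegree_map, natDegree_add_C,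
      hg.natDegree_pow]
  have hder : derivative (g ^ n + C c) = C (n : R) * g ^ (n - 1) * derivative g := by
    rw [derivative_add, derivative_C, add_zero, derivative_pow]
  apply hinj
  rw [map_mul, map_mul, map_pow, map_pow, map_natCast, hF.map_resultant_eq_prod_eval,
    hF.map_resultant_eq_prod_eval, hF.map_resultant_eq_prod_eval, ← hcard, hder]
  generalize ((g ^ n + C c).map (algebraMap R K)).roots = s
  simp only [Polynomial.map_mul, Polynomial.map_pow, map_natCast, Polynomial.map_natCast, eval_mul,
    eval_pow, eval_natCast, Multiset.prod_map_mul, Multiset.prod_map_pow, Multiset.map_const',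
    Multiset.prod_replicate]

end PowAddC

section Integral

variable {g : ℤ[X]} {p : ℕ} [hp : Fact p.Prime]

theorem Monic.not_dvd_resultant_pow_add_C_derivative (hg : g.Monic)
    (hsep : (g.map (Int.castRingHom (ZMod p))).Separable) {n : ℕ} (hn : 0 < n)
    (hd : 0 < g.natDegree) {c : ℤ} (hc : (p : ℤ) ∣ c) :
    ¬ (p : ℤ) ∣ resultant (g ^ n + C c) (derivative g) := by
  let K := AlgebraicClosure (ZMod p)
  let π := Int.castRingHom K
  have hgK : (g.map π).Separable := by
    have hπ : g.map π = (g.map (Int.castRingHom (ZMod p))).map (algebraMap (ZMod p) K) := by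
      rw [Polynomial.map_map]; congr 1
    exact hπ ▸ hsep.map
  have hFK : (g ^ n + C c).map π = g.map π ^ n := by
    rw [Polynomial.map_add, Polynomial.map_pow, map_C, eq_intCast,
      (CharP.intCast_eq_zero_iff K p c).mpr hc, C_0, add_zero]
  intro hdvd
  have hzero := (CharP.intCast_eq_zero_iff K p _).mpr hdvd
  rw [← eq_intCast π, (hg.pow_add_C hn hd c).map_resultant_eq_prod_eval, hFK, roots_pow,
    Multiset.map_nsmul, Multiset.prod_nsmul, ← derivative_map] at hzero
  refine pow_ne_zero n (Multiset.prod_ne_zero fun h => ?_) hzero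
  obtain ⟨r, hr, hr0⟩ := Multiset.mem_map.mp h
  exact hgK.aeval_derivative_ne_zero (x := r) (by simpa using isRoot_of_mem_roots hr)
    (by simpa using hr0)

theorem Monic.padicValInt_resultant_pow_add_C_derivative (hg : g.Monic)
    (hsep : (g.map (Int.castRingHom (ZMod p))).Separable) {n : ℕ} (hn : 0 < n)
    (hd : 0 < g.natDegree) {k : ℕ} (hk : 0 < k) :
    padicValInt p (resultant (g ^ n + C ((p : ℤ) ^ k)) (derivative (g ^ n + C ((p : ℤ) ^ k)))) =
      g.natDegree * (n * padicValNat p n + k * (n - 1)) := by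
  have hB := hg.not_dvd_resultant_pow_add_C_derivative hsep hn hd (dvd_pow_self (p : ℤ) hk.ne')
  rw [Int.natCast_dvd] at hB
  have hB0 : (resultant (g ^ n + C ((p : ℤ) ^ k)) (derivative g)).natAbs ≠ 0 :=
    fun h => hB (h ▸ dvd_zero p)
  rw [hg.resultant_pow_add_C_derivative hn hd, hg.resultant_pow_add_C_self hn, padicValInt]
  simp only [Int.natAbs_mul, Int.natAbs_pow, Int.natAbs_neg, Int.natAbs_one, one_pow, one_mul,
    Int.natAbs_natCast, ← pow_mul]
  rw [padicValNat.mul (mul_ne_zero (pow_ne_zero _ hn.ne') (pow_ne_zero _ hp.out.ne_zero)) hB0,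
    padicValNat.mul (pow_ne_zero _ hn.ne') (pow_ne_zero _ hp.out.ne_zero),
    padicValNat.pow, padicValNat.prime_pow, padicValNat.eq_zero_of_not_dvd hB]
  ring

end Integral

theorem separable_map_cyclotomic_zmod {m p : ℕ} [Fact p.Prime] (hpm : ¬ p ∣ m) :
    ((cyclotomic m ℤ).map (Int.castRingHom (ZMod p))).Separable := by
  have : NeZero (m : ZMod p) := ⟨by rwa [Ne, ZMod.natCast_eq_zero_iff]⟩
  rw [map_cyclotomic]
  exact separable_cyclotomic m _

end Polynomial

theorem padicValInt_neg_one_pow_mul (p s : ℕ) (z : ℤ) :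
    padicValInt p ((-1) ^ s * z) = padicValInt p z := by
  simp [padicValInt, Int.natAbs_mul, Int.natAbs_pow]

theorem ratDisc_map_intCast {f : ℤ[X]} (hf : f.Monic) :
    ratDisc (f.map (Int.castRingHom ℚ)) =
      (((-1) ^ (f.natDegree * (f.natDegree - 1) / 2) * resultant f (derivative f) : ℤ) : ℂ) := by
  have hcomp : (algebraMap ℚ ℂ).comp (Int.castRingHom ℚ) = Int.castRingHom ℂ :=
    RingHom.ext_int _ _
  rw [ratDisc, Polynomial.map_map, hcomp, hf.natDegree_map, derivative_map, Int.cast_mul,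
    ← eq_intCast (Int.castRingHom ℂ) (resultant _ _), hf.map_resultant_eq_prod_eval]
  exact_mod_cast rfl

theorem padic_val_disc_cyclotomic_family_general (ℓ p n k : ℕ) (hℓ : ℓ.Prime) (hp : p.Prime)
    (hne : ℓ ≠ p) (hn : 0 < n) (hk : 0 < k) :
    ∃ d : ℚ,
      (d : ℂ) = ratDisc ((∑ i ∈ Finset.range ℓ, (X : Polynomial ℚ) ^ i) ^ n + C ((p : ℚ) ^ k)) ∧
      padicValRat p d = ((ℓ : ℤ) - 1) * ((n : ℤ) * padicValNat p n + (k : ℤ) * ((n : ℤ) - 1)) := by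
  have := Fact.mk hℓ
  have := Fact.mk hp
  have hΦ := cyclotomic.monic ℓ ℤ
  have hdeg : (cyclotomic ℓ ℤ).natDegree = ℓ - 1 := by
    rw [natDegree_cyclotomic, Nat.totient_prime hℓ]
  have hd : 0 < (cyclotomic ℓ ℤ).natDegree := hdeg ▸ Nat.sub_pos_of_lt hℓ.one_lt
  have hsep := separable_map_cyclotomic_zmod (m := ℓ) (p := p)
    (fun h => hne ((Nat.prime_dvd_prime_iff_eq hp hℓ).mp h).symm)
  set F := cyclotomic ℓ ℤ ^ n + C ((p : ℤ) ^ k)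
  have hF : (∑ i ∈ Finset.range ℓ, (X : ℚ[X]) ^ i) ^ n + C ((p : ℚ) ^ k) =
      F.map (Int.castRingHom ℚ) := by
    rw [Polynomial.map_add, Polynomial.map_pow, map_cyclotomic, cyclotomic_prime, map_C]
    simp
  refine ⟨((-1) ^ (F.natDegree * (F.natDegree - 1) / 2) * resultant F (derivative F) : ℤ), ?_, ?_⟩
  · rw [hF, ratDisc_map_intCast (hΦ.pow_add_C hn hd _)]
    exact_mod_cast rfl
  · rw [padicValRat.of_int, padicValInt_neg_one_pow_mul,
      hΦ.padicValInt_resultant_pow_add_C_derivative hsep hn hd hk, hdeg]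
    push_cast [Nat.cast_sub hℓ.one_le, Nat.cast_sub hn]
    ring

/-- for distinct primes `ℓ, p` and coprime positive `n, k`,
`v_p(disc(Φ_ℓ(x)^n + p^k)) = (ℓ-1)(n v_p(n) + k(n-1))`, where
`Φ_ℓ(x) = 1 + x + ⋯ + x^{ℓ-1}`. -/
theorem padic_val_disc_cyclotomic_family (ℓ p n k : ℕ) (hℓ : ℓ.Prime) (hp : p.Prime)
    (hne : ℓ ≠ p) (hn : 0 < n) (hk : 0 < k) (hcop : Nat.Coprime n k) :
    ∃ d : ℚ,
      (d : ℂ) = ratDisc ((∑ i ∈ Finset.range ℓ, (X : Polynomial ℚ) ^ i) ^ n + C ((p : ℚ) ^ k)) ∧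
      padicValRat p d = ((ℓ : ℤ) - 1) * ((n : ℤ) * padicValNat p n + (k : ℤ) * ((n : ℤ) - 1)) :=
  padic_val_disc_cyclotomic_family_general ℓ p n k hℓ hp hne hn hk
end

section
/- Let p > 3 be a prime and let E₁(x) = x² + p, E₂(x) = E₁(x)² + (p−1)p³x ∈ ℤ_p[x]. Then E₂ is irreducible over ℚ_p and the extension ℚ_p(θ)/ℚ_p generated by a root θ of E₂ is totally ramified of degree 4, with v_p(θ) = 1/2 and v_p(E₁(θ)) = 7/4. -/
/-!
If `θ` is a root of `E₂`, then `s = θ² + p` satisfies `s² = -(p - 1)p³θ`, and `π = s / (pθ)`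
is a root of `X⁴ + p(p - 1)X³ + p(p - 1)²`, which is Eisenstein over `ℤ_p`. Hence every field
containing a root of `E₂` has degree at least `4` over `ℚ_p`, so `E₂` is irreducible.
In `L = ℚ_p(θ)` the norm of `θ` is the constant term `p²` of `E₂`, and taking norms in
`θπ² = (1 - p)p` and `θ² + p = pθπ` gives `v(N π) = 1` and `v(N(θ² + p)) = 4 + 2 + 1 = 7`.
-/

universe u

namespace Polynomial

theorem isEisensteinAt_X_pow_four_add_C_mul_X_pow_three_add_C {R : Type*} [CommRing R]
    [IsDomain R] {π u : R} (hπ : Prime π) (hu : ¬π ∣ u) :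
    (X ^ 4 + C (π * u) * X ^ 3 + C (π * u ^ 2)).IsEisensteinAt (Ideal.span {π}) := by
  have hdeg : (X ^ 4 + C (π * u) * X ^ 3 + C (π * u ^ 2)).natDegree = 4 := by compute_degree!
  have hmonic : (X ^ 4 + C (π * u) * X ^ 3 + C (π * u ^ 2)).Monic := by monicity!
  refine ⟨?_, fun {n} hn => ?_, ?_⟩
  · rw [hmonic.leadingCoeff, Ideal.mem_span_singleton]
    exact hπ.not_dvd_one
  · rw [hdeg] at hn
    rw [Ideal.mem_span_singleton]
    interval_cases n <;> simp [coeff_X_pow, coeff_C, -map_mul, -map_pow]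
  · have hcoeff : (X ^ 4 + C (π * u) * X ^ 3 + C (π * u ^ 2)).coeff 0 = π * u ^ 2 := by
      simp [-map_mul, -map_pow]
    rw [Ideal.span_singleton_pow, Ideal.mem_span_singleton, hcoeff, sq π,
      mul_dvd_mul_iff_left hπ.ne_zero]
    exact fun h => hu (hπ.dvd_of_dvd_pow h)

theorem irreducible_X_pow_four_add_C_mul_X_pow_three_add_C {R K : Type*} [CommRing R]
    [IsDomain R] [IsIntegrallyClosed R] [Field K] [Algebra R K] [IsFractionRing R K] {π u : R}
    (hπ : Prime π) (hu : ¬π ∣ u) :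
    Irreducible (X ^ 4 + C (algebraMap R K (π * u)) * X ^ 3 + C (algebraMap R K (π * u ^ 2))) := by
  have hdeg : (X ^ 4 + C (π * u) * X ^ 3 + C (π * u ^ 2)).natDegree = 4 := by compute_degree!
  have hmonic : (X ^ 4 + C (π * u) * X ^ 3 + C (π * u ^ 2)).Monic := by monicity!
  have hirr := (isEisensteinAt_X_pow_four_add_C_mul_X_pow_three_add_C hπ hu).irreducible
    ((Ideal.span_singleton_prime hπ.ne_zero).mpr hπ) hmonic.isPrimitive (by omega)
  simpa using (hmonic.irreducible_iff_irreducible_map_fraction_map (K := K)).mp hirr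

theorem irreducible_of_forall_natDegree_le_finrank {K : Type u} [Field K] {f : K[X]}
    (hf : 0 < f.natDegree)
    (h : ∀ (L : Type u) [Field L] [Algebra K L] [FiniteDimensional K L] (θ : L),
      aeval θ f = 0 → f.natDegree ≤ Module.finrank K L) :
    Irreducible f := by
  obtain ⟨q, hq, r, rfl⟩ := exists_irreducible_of_natDegree_pos hf
  have : Fact (Irreducible q) := ⟨hq⟩
  let pb := AdjoinRoot.powerBasis hq.ne_zero
  have : FiniteDimensional K (AdjoinRoot q) := pb.finite
  have hle := h (AdjoinRoot q) (AdjoinRoot.root q) (by simp [AdjoinRoot.aeval_eq])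
  have hr0 : r ≠ 0 := by rintro rfl; simp at hf
  rw [pb.finrank, AdjoinRoot.powerBasis_dim, natDegree_mul hq.ne_zero hr0] at hle
  rw [eq_C_of_natDegree_eq_zero (by omega : r.natDegree = 0)] at hr0 ⊢
  exact (irreducible_mul_isUnit (isUnit_C.mpr (C_ne_zero.mp hr0).isUnit)).mpr hq

end Polynomial

open Polynomial

namespace Padic

variable {p : ℕ} [hp : Fact p.Prime]

theorem valuation_natCast_sub_one : ((p : ℚ_[p]) - 1).valuation = 0 := by
  have := hp.out.two_le
  rw [← Nat.cast_pred hp.out.pos, valuation_natCast, padicValNat.eq_zero_of_not_dvd, Nat.cast_zero]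
  exact fun h => absurd (Nat.le_of_dvd (by omega) h) (by omega)

theorem natCast_ne_zero_of_algebra {L : Type*} [Field L] [Algebra ℚ_[p] L] : (p : L) ≠ 0 := by
  have : CharZero L := charZero_of_injective_algebraMap (algebraMap ℚ_[p] L).injective
  exact Nat.cast_ne_zero.mpr hp.out.ne_zero

end Padic

section

variable (p : ℕ) [hp : Fact p.Prime]

noncomputable def E₂ : ℚ_[p][X] :=
  (X ^ 2 + C (p : ℚ_[p])) ^ 2 + C ((p : ℚ_[p]) - 1) * C ((p : ℚ_[p]) ^ 3) * X

theorem monic_E₂ : (E₂ p).Monic := by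
  unfold E₂; monicity!

theorem natDegree_E₂ : (E₂ p).natDegree = 4 := by
  unfold E₂; compute_degree!

theorem coeff_zero_E₂ : (E₂ p).coeff 0 = p ^ 2 := by
  simp [E₂, coeff_zero_eq_eval_zero]

namespace E₂

noncomputable def uniformizerPoly : ℚ_[p][X] :=
  X ^ 4 + C ((p : ℚ_[p]) * (p - 1)) * X ^ 3 + C ((p : ℚ_[p]) * (p - 1) ^ 2)

theorem monic_uniformizerPoly : (uniformizerPoly p).Monic := by
  unfold uniformizerPoly; monicity!

theorem natDegree_uniformizerPoly : (uniformizerPoly p).natDegree = 4 := by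
  unfold uniformizerPoly; compute_degree!

theorem irreducible_uniformizerPoly : Irreducible (uniformizerPoly p) := by
  have hu : ¬(p : ℤ_[p]) ∣ p - 1 := fun h =>
    PadicInt.prime_p.not_dvd_one (by simpa using dvd_sub (dvd_refl (p : ℤ_[p])) h)
  simpa [uniformizerPoly] using
    irreducible_X_pow_four_add_C_mul_X_pow_three_add_C (K := ℚ_[p]) PadicInt.prime_p hu

variable {p} {L : Type*} [Field L] [Algebra ℚ_[p] L] {θ : L}

theorem aeval_eq (θ : L) : aeval θ (E₂ p) = (θ ^ 2 + p) ^ 2 + (p - 1) * p ^ 3 * θ := by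
  simp [E₂]

theorem ne_zero_of_aeval (hθ : aeval θ (E₂ p) = 0) : θ ≠ 0 := by
  rintro rfl
  rw [aeval_eq] at hθ
  simp [Padic.natCast_ne_zero_of_algebra] at hθ

variable (p) in
noncomputable def uniformizer (θ : L) : L := (θ ^ 2 + p) / (p * θ)

theorem sq_add_eq_mul_uniformizer (hθ : aeval θ (E₂ p) = 0) :
    θ ^ 2 + p = p * θ * uniformizer p θ := by
  rw [uniformizer, mul_div_cancel₀ _
    (mul_ne_zero Padic.natCast_ne_zero_of_algebra (ne_zero_of_aeval hθ))]

theorem mul_uniformizer_sq (hθ : aeval θ (E₂ p) = 0) :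
    θ * uniformizer p θ ^ 2 = (1 - p) * p := by
  have hθ0 := ne_zero_of_aeval hθ
  have hp0 : (p : L) ≠ 0 := Padic.natCast_ne_zero_of_algebra
  rw [aeval_eq] at hθ
  rw [uniformizer]
  field_simp
  linear_combination hθ

theorem uniformizer_ne_zero (hθ : aeval θ (E₂ p) = 0) : uniformizer p θ ≠ 0 := by
  have : CharZero L := charZero_of_injective_algebraMap (algebraMap ℚ_[p] L).injective
  have := hp.out.two_le
  intro hy
  have hθy := mul_uniformizer_sq hθ
  rw [hy] at hθy
  simp [sub_eq_zero, eq_comm (a := (1 : L))] at hθy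
  omega

theorem aeval_uniformizer (hθ : aeval θ (E₂ p) = 0) :
    aeval (uniformizer p θ) (uniformizerPoly p) = 0 := by
  have h1 := mul_uniformizer_sq hθ
  have h2 := sq_add_eq_mul_uniformizer hθ
  set y := uniformizer p θ
  have : θ ^ 2 * aeval y (uniformizerPoly p) = 0 := by
    simp only [uniformizerPoly, map_add, map_mul, map_pow, aeval_X, map_sub, map_natCast, map_one]
    linear_combination (θ * y ^ 2 - (p - 1) * p + (p - 1) * p * θ * y) * h1 + (p - 1) ^ 2 * p * h2
  exact (mul_eq_zero.mp this).resolve_left (pow_ne_zero 2 (ne_zero_of_aeval hθ))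

theorem four_le_finrank [FiniteDimensional ℚ_[p] L] (hθ : aeval θ (E₂ p) = 0) :
    4 ≤ Module.finrank ℚ_[p] L := by
  have hmin := minpoly.eq_of_irreducible_of_monic (irreducible_uniformizerPoly p)
    (aeval_uniformizer hθ) (monic_uniformizerPoly p)
  simpa [← hmin, natDegree_uniformizerPoly] using
    minpoly.natDegree_le (A := ℚ_[p]) (uniformizer p θ)

end E₂

theorem irreducible_E₂ : Irreducible (E₂ p) :=
  irreducible_of_forall_natDegree_le_finrank (by rw [natDegree_E₂]; norm_num)
    fun _ _ _ _ _ hθ => natDegree_E₂ p ▸ E₂.four_le_finrank hθ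

namespace E₂

variable {p} {L : Type*} [Field L] [Algebra ℚ_[p] L] {θ : L}

theorem isIntegral (hθ : aeval θ (E₂ p) = 0) : IsIntegral ℚ_[p] θ :=
  ⟨E₂ p, monic_E₂ p, by rwa [← aeval_def]⟩

theorem minpoly_eq (hθ : aeval θ (E₂ p) = 0) : minpoly ℚ_[p] θ = E₂ p :=
  (minpoly.eq_of_irreducible_of_monic (irreducible_E₂ p) hθ (monic_E₂ p)).symm

theorem finrank_eq (hθ : aeval θ (E₂ p) = 0) (hgen : Algebra.adjoin ℚ_[p] {θ} = ⊤) :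
    Module.finrank ℚ_[p] L = 4 := by
  rw [(PowerBasis.ofAdjoinEqTop (isIntegral hθ) hgen).finrank, PowerBasis.ofAdjoinEqTop_dim,
    minpoly_eq hθ, natDegree_E₂]

theorem norm_eq (hθ : aeval θ (E₂ p) = 0) (hgen : Algebra.adjoin ℚ_[p] {θ} = ⊤) :
    Algebra.norm ℚ_[p] θ = p ^ 2 := by
  have := Algebra.PowerBasis.norm_gen_eq_coeff_zero_minpoly
    (PowerBasis.ofAdjoinEqTop (isIntegral hθ) hgen)
  norm_num [minpoly_eq hθ, natDegree_E₂, coeff_zero_E₂] at this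
  exact this

theorem norm_uniformizer_ne_zero (hθ : aeval θ (E₂ p) = 0)
    (hgen : Algebra.adjoin ℚ_[p] {θ} = ⊤) : Algebra.norm ℚ_[p] (uniformizer p θ) ≠ 0 :=
  have : FiniteDimensional ℚ_[p] L :=
    Module.finite_of_finrank_pos (by rw [finrank_eq hθ hgen]; norm_num)
  Algebra.norm_ne_zero_iff.mpr (uniformizer_ne_zero hθ)

theorem valuation_norm (hθ : aeval θ (E₂ p) = 0) (hgen : Algebra.adjoin ℚ_[p] {θ} = ⊤) :
    (Algebra.norm ℚ_[p] θ).valuation = 2 := by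
  simp [norm_eq hθ hgen, Padic.valuation_pow]

theorem valuation_norm_uniformizer (hθ : aeval θ (E₂ p) = 0)
    (hgen : Algebra.adjoin ℚ_[p] {θ} = ⊤) :
    (Algebra.norm ℚ_[p] (uniformizer p θ)).valuation = 1 := by
  have hp0 : (p : ℚ_[p]) ≠ 0 := Nat.cast_ne_zero.mpr hp.out.ne_zero
  have hp1 : (p : ℚ_[p]) - 1 ≠ 0 := sub_ne_zero.mpr (Nat.cast_ne_one.mpr hp.out.ne_one)
  have hnorm : Algebra.norm ℚ_[p] θ * Algebra.norm ℚ_[p] (uniformizer p θ) ^ 2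
      = ((p - 1) * p) ^ 4 := by
    rw [← map_pow, ← map_mul, mul_uniformizer_sq hθ,
      show ((1 - p) * p : L) = algebraMap ℚ_[p] L ((1 - p) * p) by simp, Algebra.norm_algebraMap,
      finrank_eq hθ hgen]
    ring
  have hv := congrArg Padic.valuation hnorm
  rw [norm_eq hθ hgen,
    Padic.valuation_mul (pow_ne_zero 2 hp0) (pow_ne_zero 2 (norm_uniformizer_ne_zero hθ hgen)),
    Padic.valuation_pow, Padic.valuation_pow, Padic.valuation_pow, Padic.valuation_mul hp1 hp0,
    Padic.valuation_natCast_sub_one, Padic.valuation_p] at hv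
  omega

theorem valuation_norm_sq_add (hθ : aeval θ (E₂ p) = 0) (hgen : Algebra.adjoin ℚ_[p] {θ} = ⊤) :
    (Algebra.norm ℚ_[p] (θ ^ 2 + p)).valuation = 7 := by
  have hp0 : (p : ℚ_[p]) ≠ 0 := Nat.cast_ne_zero.mpr hp.out.ne_zero
  rw [sq_add_eq_mul_uniformizer hθ, map_mul, map_mul, ← map_natCast (algebraMap ℚ_[p] L),
    Algebra.norm_algebraMap, finrank_eq hθ hgen, norm_eq hθ hgen,
    Padic.valuation_mul (mul_ne_zero (pow_ne_zero 4 hp0) (pow_ne_zero 2 hp0))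
      (norm_uniformizer_ne_zero hθ hgen),
    Padic.valuation_mul (pow_ne_zero 4 hp0) (pow_ne_zero 2 hp0), Padic.valuation_pow,
    Padic.valuation_pow, Padic.valuation_p, valuation_norm_uniformizer hθ hgen]
  norm_num

end E₂

end

theorem E2_irreducible_totally_ramified_general (p : ℕ) [Fact p.Prime] :
    Irreducible
        ((X ^ 2 + C (p : ℚ_[p])) ^ 2 + C ((p : ℚ_[p]) - 1) * C ((p : ℚ_[p]) ^ 3) * X) ∧
      ∀ (L : Type) [Field L] [Algebra ℚ_[p] L] (θ : L),
        Polynomial.aeval θ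
            ((X ^ 2 + C (p : ℚ_[p])) ^ 2 + C ((p : ℚ_[p]) - 1) * C ((p : ℚ_[p]) ^ 3) * X) = 0 →
        Algebra.adjoin ℚ_[p] {θ} = ⊤ →
        Module.finrank ℚ_[p] L = 4 ∧
          (∃ x : L, x ≠ 0 ∧ (Algebra.norm ℚ_[p] x).valuation = 1) ∧
          (Algebra.norm ℚ_[p] θ).valuation = 2 ∧
          (Algebra.norm ℚ_[p] (θ ^ 2 + (p : L))).valuation = 7 :=
  ⟨irreducible_E₂ p, fun _ _ _ θ hθ hgen =>
    ⟨E₂.finrank_eq hθ hgen,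
      ⟨E₂.uniformizer p θ, E₂.uniformizer_ne_zero hθ, E₂.valuation_norm_uniformizer hθ hgen⟩,
      E₂.valuation_norm hθ hgen, E₂.valuation_norm_sq_add hθ hgen⟩⟩

/-- for a prime `p > 3`, the polynomial
`E₂(x) = (x² + p)² + (p-1)p³ x` is irreducible over `ℚ_p`, the extension generated by a
root `θ` is totally ramified of degree `4` (witnessed by an element of norm-valuation `1`),
and `v_p(θ) = 1/2`, `v_p(E₁(θ)) = 7/4`, expressed via
`v_p(N(θ)) = 4·(1/2) = 2` and `v_p(N(θ² + p)) = 4·(7/4) = 7`. -/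
theorem E2_irreducible_totally_ramified (p : ℕ) [Fact p.Prime] (hp3 : 3 < p) :
    Irreducible
        ((X ^ 2 + C (p : ℚ_[p])) ^ 2 + C ((p : ℚ_[p]) - 1) * C ((p : ℚ_[p]) ^ 3) * X) ∧
      ∀ (L : Type) [Field L] [Algebra ℚ_[p] L] (θ : L),
        Polynomial.aeval θ
            ((X ^ 2 + C (p : ℚ_[p])) ^ 2 + C ((p : ℚ_[p]) - 1) * C ((p : ℚ_[p]) ^ 3) * X) = 0 →
        Algebra.adjoin ℚ_[p] {θ} = ⊤ →
        Module.finrank ℚ_[p] L = 4 ∧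
          (∃ x : L, x ≠ 0 ∧ (Algebra.norm ℚ_[p] x).valuation = 1) ∧
          (Algebra.norm ℚ_[p] θ).valuation = 2 ∧
          (Algebra.norm ℚ_[p] (θ ^ 2 + (p : L))).valuation = 7 :=
  E2_irreducible_totally_ramified_general p
end
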